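/- For $m > 2$ odd, the distance Laplacian spectrum of $K_{(m-1)n, n, \ldots, n}$ (with $m$ parts of size $n$; the non-commuting graph of $M_{2mn}$) consists of $0$ with multiplicity $1$, $n(2m-1)$ with multiplicity $m$, $2mn$ with multiplicity $m(n-1)$, and $(3m-2)n$ with multiplicity $(m-1)n - 1$. In particular, this graph is distance Laplacian integral for all $m$ and $n$. -/

import Mathlib

open Polynomial

/-- The distance matrix of a graph, with real entries. -/
noncomputable def distMatrix {V : Type*} [Fintype V] (G : SimpleGraph V) : Matrix V V ℝ :=
  Matrix.of fun u v => (G.dist u v : ℝ)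

/-- The distance Laplacian matrix `Tr(G) - D(G)`. -/
noncomputable def distLapMatrix {V : Type*} [Fintype V] [DecidableEq V] (G : SimpleGraph V) :
    Matrix V V ℝ :=
  Matrix.diagonal (fun v => ∑ u, (G.dist v u : ℝ)) - distMatrix G

/-!
With `k` parts, `N` vertices and `s_i` vertices in part `i`, the distance is `1` across parts and
`2` inside a part, so `tI - D^L = B + J`, where `J` is the all-ones matrix and `B` is block
diagonal with blocks `(t - N - s_i) I + J`. Every row of `B` sums to `a = t - N`, hence
`B (I + a⁻¹ J) = B + J` and `det (B + J) = det B · (1 + N / a)`; the same identity for a single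
block gives `det ((t - N - s_i) I + J) = (t - N - s_i)^(s_i - 1) · a`. Multiplying out yields
`t (t - N)^(k - 1) ∏ (t - N - s_i)^(s_i - 1)` for all but finitely many `t`, so this is the
characteristic polynomial.
-/

open Matrix Finset

namespace Matrix

variable {ι R : Type*} [Fintype ι] [DecidableEq ι] {V : ι → Type*} [∀ i, Fintype (V i)]

theorem det_blockDiagonal' [∀ i, DecidableEq (V i)] [CommRing R]
    (M : ∀ i, Matrix (V i) (V i) R) :
    (blockDiagonal' M).det = ∏ i, (M i).det := by
  let _ : LinearOrder ι := LinearOrder.lift' _ (Fintype.equivFin ι).injective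
  rw [(blockTriangular_blockDiagonal' M).det_fintype]
  refine prod_congr rfl fun i _ => ?_
  rw [← det_submatrix_equiv_self (Equiv.sigmaSubtype i).symm]
  congr 1
  ext a b
  exact blockDiagonal'_apply_eq M i a b

theorem sum_blockDiagonal'_apply [AddCommMonoid R] (M : ∀ i, Matrix (V i) (V i) R)
    (u : Σ i, V i) : ∑ w, blockDiagonal' M u w = ∑ q, M u.1 u.2 q := by
  rw [Fintype.sum_sigma, Fintype.sum_eq_single u.1]
  · exact sum_congr rfl fun q _ => blockDiagonal'_apply_eq M _ _ _
  · exact fun j hj => sum_eq_zero fun q _ => blockDiagonal'_apply_ne M _ _ (Ne.symm hj)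

end Matrix

section AllOnes

variable {K n : Type*} [Field K] [Fintype n] [DecidableEq n]

theorem det_add_of_fun_one_of_sum_row_eq (A : Matrix n n K) {a : K} (ha : a ≠ 0)
    (hA : ∀ i, ∑ j, A i j = a) :
    (A + of fun _ _ => 1).det = A.det * (1 + Fintype.card n / a) := by
  have hJ : (of fun _ _ => (1 : K) : Matrix n n K) =
      replicateCol Unit (fun _ => (1 : K)) * replicateRow Unit (fun _ => (1 : K)) := by
    ext; simp [mul_apply]
  have hfactor : A * (1 + a⁻¹ • of fun _ _ => 1) = A + of fun _ _ => 1 := by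
    rw [Matrix.mul_add, Matrix.mul_one]
    congr 1
    ext i j
    simp [mul_apply, ← sum_mul, hA, ha]
  have hdet : (1 + a⁻¹ • of fun _ _ => 1 : Matrix n n K).det = 1 + Fintype.card n / a := by
    rw [hJ, ← Matrix.smul_mul, ← replicateCol_smul, det_one_add_replicateCol_mul_replicateRow]
    simp [dotProduct, div_eq_mul_inv]
  rw [← hfactor, det_mul, hdet]

theorem det_smul_one_add_of_fun_one [Nonempty n] {c : K} (hc : c ≠ 0) :
    (c • (1 : Matrix n n K) + of fun _ _ => 1).det =
      c ^ (Fintype.card n - 1) * (c + Fintype.card n) := by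
  rw [det_add_of_fun_one_of_sum_row_eq _ hc, det_smul, det_one, mul_one,
    ← pow_sub_one_mul Fintype.card_ne_zero]
  · field_simp
  · intro i
    simp [one_apply]

theorem det_blockDiagonal'_smul_one_add_of_fun_one {ι : Type*} [Fintype ι] [DecidableEq ι]
    [Nonempty ι] {V : ι → Type*} [∀ i, Fintype (V i)] [∀ i, DecidableEq (V i)]
    [∀ i, Nonempty (V i)] (c : ι → K) {a : K} (ha : a ≠ 0) (hc : ∀ i, c i ≠ 0)
    (hca : ∀ i, c i + Fintype.card (V i) = a) :
    (blockDiagonal' (fun i => c i • (1 : Matrix (V i) (V i) K) + of fun _ _ => 1) +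
        of fun _ _ => 1).det =
      a ^ (Fintype.card ι - 1) * (a + Fintype.card (Σ i, V i)) *
        ∏ i, c i ^ (Fintype.card (V i) - 1) := by
  have hrow : ∀ u, ∑ w, blockDiagonal' (fun i => c i • (1 : Matrix (V i) (V i) K) +
      of fun _ _ => 1) u w = a := fun u => by
    simp [sum_blockDiagonal'_apply, sum_add_distrib, one_apply, ← hca u.1]
  rw [det_add_of_fun_one_of_sum_row_eq _ ha hrow, det_blockDiagonal']
  simp only [det_smul_one_add_of_fun_one (hc _), hca, prod_mul_distrib, prod_const, card_univ]
  rw [← pow_sub_one_mul (Fintype.card_ne_zero (α := ι))]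
  field_simp

end AllOnes

namespace SimpleGraph

variable {ι : Type*} [DecidableEq ι] {V : ι → Type*} [∀ i, DecidableEq (V i)]

theorem completeMultipartiteGraph.dist_eq [Nontrivial ι] [∀ i, Nonempty (V i)]
    (u v : Σ i, V i) :
    (completeMultipartiteGraph V).dist u v = if u = v then 0 else if u.1 = v.1 then 2 else 1 := by
  split_ifs with huv hpart
  · rw [huv, dist_self]
  · obtain ⟨j, hj⟩ := exists_ne u.1
    have hw : (completeMultipartiteGraph V).Adj u ⟨j, Classical.arbitrary (V j)⟩ := hj.symm
    have hw' : (completeMultipartiteGraph V).Adj ⟨j, Classical.arbitrary (V j)⟩ v :=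
      fun h => hj (h.trans hpart.symm)
    let walk := Walk.cons hw (Walk.cons hw' Walk.nil)
    have hle : (completeMultipartiteGraph V).dist u v ≤ 2 := dist_le walk
    have hne0 : (completeMultipartiteGraph V).dist u v ≠ 0 :=
      dist_ne_zero_iff_ne_and_reachable.mpr ⟨huv, walk.reachable⟩
    have hne1 : (completeMultipartiteGraph V).dist u v ≠ 1 := fun h =>
      dist_eq_one_iff_adj.mp h hpart
    omega
  · exact dist_eq_one_iff_adj.mpr hpart

end SimpleGraph

section CompleteMultipartite

open SimpleGraph

variable {ι : Type*} [Fintype ι] [DecidableEq ι] {V : ι → Type*} [∀ i, Fintype (V i)]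
  [∀ i, DecidableEq (V i)] [Nontrivial ι] [∀ i, Nonempty (V i)]

theorem distMatrix_completeMultipartiteGraph :
    distMatrix (completeMultipartiteGraph V) =
      blockDiagonal' (fun _ => of fun _ _ => 1) + (of fun _ _ => 1) - (2 : ℝ) • 1 := by
  ext ⟨i, p⟩ ⟨j, q⟩
  simp only [distMatrix, completeMultipartiteGraph.dist_eq, Matrix.sub_apply, Matrix.add_apply,
    Matrix.smul_apply, blockDiagonal'_apply', one_apply, of_apply]
  by_cases hij : i = j
  · subst hij
    by_cases hpq : p = q <;> norm_num [hpq]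
  · simp [hij]

theorem scalar_sub_distLapMatrix_completeMultipartiteGraph (t : ℝ) :
    scalar _ t - distLapMatrix (completeMultipartiteGraph V) =
      blockDiagonal' (fun i => (t - Fintype.card (Σ i, V i) - Fintype.card (V i)) •
        (1 : Matrix (V i) (V i) ℝ) + of fun _ _ => 1) + of fun _ _ => 1 := by
  have hrow : ∀ u : Σ i, V i, ∑ w, ((completeMultipartiteGraph V).dist u w : ℝ) =
      Fintype.card (V u.1) + Fintype.card (Σ i, V i) - 2 := fun u => by
    have hdist := congrFun (congrFun distMatrix_completeMultipartiteGraph u)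
    simp only [distMatrix, of_apply, Matrix.sub_apply, Matrix.add_apply, Matrix.smul_apply] at hdist
    simp [hdist, sum_add_distrib, sum_sub_distrib, sum_blockDiagonal'_apply, one_apply]
  ext ⟨i, p⟩ ⟨j, q⟩
  by_cases hij : i = j
  · subst hij
    simp only [distLapMatrix, distMatrix_completeMultipartiteGraph, Matrix.sub_apply,
      Matrix.add_apply, Matrix.smul_apply, blockDiagonal'_apply_eq, scalar_apply, diagonal_apply,
      one_apply, of_apply, hrow, Sigma.mk.inj_iff, heq_eq_eq, true_and, smul_eq_mul]
    split_ifs <;> ring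
  · simp [hij, distLapMatrix, distMatrix_completeMultipartiteGraph, blockDiagonal'_apply_ne,
      one_apply]

theorem charpoly_distLapMatrix_completeMultipartiteGraph :
    (distLapMatrix (completeMultipartiteGraph V)).charpoly =
      X * (X - C (Fintype.card (Σ i, V i) : ℝ)) ^ (Fintype.card ι - 1) *
        ∏ i, (X - C ((Fintype.card (Σ i, V i) : ℝ) + Fintype.card (V i))) ^
          (Fintype.card (V i) - 1) := by
  set N : ℝ := (Fintype.card (Σ i, V i) : ℝ)
  have hfin : (insert N (Set.range fun i => N + Fintype.card (V i))).Finite :=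
    (Set.finite_range _).insert N
  refine eq_of_infinite_eval_eq _ _ (hfin.infinite_compl.mono fun t ht => ?_)
  simp only [Set.mem_compl_iff, Set.mem_insert_iff, Set.mem_range, not_or, not_exists] at ht
  have ha : t - N ≠ 0 := sub_ne_zero.mpr ht.1
  have hc : ∀ i, t - N - Fintype.card (V i) ≠ 0 := fun i => by
    rw [sub_sub]; exact sub_ne_zero.mpr (Ne.symm (ht.2 i))
  rw [Set.mem_ofPred_eq, eval_charpoly, scalar_sub_distLapMatrix_completeMultipartiteGraph,
    det_blockDiagonal'_smul_one_add_of_fun_one _ ha hc (fun i => sub_add_cancel _ _)]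
  simp only [eval_mul, eval_pow, eval_prod, eval_sub, eval_X, eval_C, sub_add_eq_sub_sub, N]
  ring

theorem exists_intCast_eq_of_mem_roots_charpoly_distLapMatrix_completeMultipartiteGraph {μ : ℝ}
    (hμ : μ ∈ (distLapMatrix (completeMultipartiteGraph V)).charpoly.roots) :
    ∃ z : ℤ, μ = z := by
  rw [charpoly_distLapMatrix_completeMultipartiteGraph] at hμ
  have hroot := isRoot_of_mem_roots hμ
  simp only [IsRoot, eval_mul, eval_pow, eval_prod, eval_sub, eval_X, eval_C, mul_eq_zero,
    pow_eq_zero_iff', prod_eq_zero_iff, sub_eq_zero] at hroot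
  rcases hroot with (rfl | ⟨rfl, -⟩) | ⟨i, -, rfl, -⟩
  · exact ⟨0, by simp⟩
  · exact ⟨Fintype.card (Σ i, V i), by simp⟩
  · exact ⟨Fintype.card (Σ i, V i) + Fintype.card (V i), by push_cast; rfl⟩

end CompleteMultipartite

theorem distLaplacian_spectrum_metacyclic_odd_general (m n : ℕ) (hm : 2 < m)
    (hn : 1 ≤ n) :
    (distLapMatrix (SimpleGraph.completeMultipartiteGraph
        fun i : Fin (m + 1) => Fin (if i = 0 then (m - 1) * n else n))).charpoly =
      X * (X - C ((n : ℝ) * (2 * m - 1))) ^ m * (X - C (2 * (m : ℝ) * n)) ^ (m * (n - 1)) *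
        (X - C ((3 * (m : ℝ) - 2) * n)) ^ ((m - 1) * n - 1) ∧
    ∀ μ ∈ (distLapMatrix (SimpleGraph.completeMultipartiteGraph
        fun i : Fin (m + 1) => Fin (if i = 0 then (m - 1) * n else n))).charpoly.roots,
      ∃ z : ℤ, μ = (z : ℝ) := by
  have : Nontrivial (Fin (m + 1)) := Fin.nontrivial_iff_two_le.mpr (by omega)
  have : ∀ i : Fin (m + 1), Nonempty (Fin (if i = 0 then (m - 1) * n else n)) := fun i => by
    split_ifs
    exacts [⟨⟨0, Nat.mul_pos (by omega) hn⟩⟩, ⟨⟨0, hn⟩⟩]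
  have hN : (Fintype.card (Σ i : Fin (m + 1), Fin (if i = 0 then (m - 1) * n else n)) : ℝ) =
      n * (2 * m - 1) := by
    simp only [Fintype.card_sigma, Fintype.card_fin, Fin.sum_univ_succ, if_true, Fin.succ_ne_zero,
      if_false, sum_const, card_univ, smul_eq_mul]
    push_cast [Nat.cast_sub (by omega : 1 ≤ m)]
    ring
  refine ⟨?_, fun μ =>
    exists_intCast_eq_of_mem_roots_charpoly_distLapMatrix_completeMultipartiteGraph⟩
  rw [charpoly_distLapMatrix_completeMultipartiteGraph, Fin.prod_univ_succ, hN]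
  simp only [Fintype.card_fin, Fin.succ_ne_zero, if_true, if_false, prod_const, card_univ,
    ← pow_mul]
  have hbig : (n : ℝ) * (2 * m - 1) + ((m - 1) * n : ℕ) = (3 * m - 2) * n := by
    push_cast [Nat.cast_sub (by omega : 1 ≤ m)]
    ring
  have hsmall : (n : ℝ) * (2 * m - 1) + n = 2 * m * n := by ring
  rw [hbig, hsmall, Nat.add_sub_cancel, Nat.mul_comm (n - 1)]
  ring

/-- For `m > 2` odd, the distance Laplacian spectrum of `K_{(m-1)n,n,…,n}` (with `m` parts
of size `n`; the non-commuting graph of `M_{2mn}`) consists of `0` with multiplicity `1`,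
`n(2m-1)` with multiplicity `m`, `2mn` with multiplicity `m(n-1)`, and `(3m-2)n` with
multiplicity `(m-1)n-1`; in particular this graph is distance Laplacian integral. -/
theorem distLaplacian_spectrum_metacyclic_odd (m n : ℕ) (hm : 2 < m) (hodd : Odd m)
    (hn : 1 ≤ n) :
    (distLapMatrix (SimpleGraph.completeMultipartiteGraph
        fun i : Fin (m + 1) => Fin (if i = 0 then (m - 1) * n else n))).charpoly =
      X * (X - C ((n : ℝ) * (2 * m - 1))) ^ m * (X - C (2 * (m : ℝ) * n)) ^ (m * (n - 1)) *
        (X - C ((3 * (m : ℝ) - 2) * n)) ^ ((m - 1) * n - 1) ∧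
    ∀ μ ∈ (distLapMatrix (SimpleGraph.completeMultipartiteGraph
        fun i : Fin (m + 1) => Fin (if i = 0 then (m - 1) * n else n))).charpoly.roots,
      ∃ z : ℤ, μ = (z : ℝ) :=
  distLaplacian_spectrum_metacyclic_odd_general m n hm hn
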